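/- arXiv:2201.10964 — 2 statements merged into one kernel-verified Lean document; each statement's English description precedes it below -/
import Mathlib

section
/- Let f be a polynomial in ℂ[x] with deg f ≥ 1. Then the set of vectors (n, m, deg p, deg q) ∈ ℕ⁴ arising from solutions (n, m, p, q) of the Pillai equation p^n − q^m = f, where n, m ≥ 2 are integers and p, q ∈ ℂ[x] are polynomials with deg p ≥ 1 and deg q ≥ 1, is finite. -/
/-!
Mason–Stothers, applied after dividing `p ^ n`, `-q ^ m`, `-f` by the common factor of the first
two (whose degree is at most `deg f`), bounds both `n deg p` and `m deg q` by
`deg p + deg q + 2 deg f`. Unless `n = m = 2`, one exponent is at least `3`, so with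
`N = max (n deg p) (m deg q)` this reads `N ≤ (1/3 + 1/2) N + 2 deg f`, i.e. `N ≤ 12 deg f`; when
`n = m = 2`, the factorization `(p + q) (p - q) = f` gives `deg p, deg q ≤ deg f`. Since `p` and
`q` are nonconstant, all four of `n, m, deg p, deg q` are then at most `12 deg f`.
-/

open Polynomial UniqueFactorizationMonoid

namespace Polynomial

variable {k : Type*} [Field k]

theorem natDegree_le_natDegree_add_natDegree_radical [DecidableEq k] [CharZero k] {a b c : k[X]}
    (ha : a ≠ 0) (hb : b ≠ 0) (hc : c ≠ 0) (hsum : a + b + c = 0) :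
    a.natDegree ≤ c.natDegree + (radical (a * b * c)).natDegree := by
  obtain ⟨A, B, hA, hB, hAB⟩ := extract_gcd a b
  generalize gcd a b = g at hA hB
  subst hA hB
  obtain rfl : c = g * -(A + B) := by linear_combination hsum
  set C := -(A + B)
  have hg : g ≠ 0 := left_ne_zero_of_mul ha
  have hA0 : A ≠ 0 := right_ne_zero_of_mul ha
  have hdeg : (g * A).natDegree ≤ (g * C).natDegree + A.natDegree := by
    rw [natDegree_mul hg hA0, natDegree_mul hg (right_ne_zero_of_mul hc)]
    omega
  rcases Polynomial.abc hA0 (right_ne_zero_of_mul hb) (right_ne_zero_of_mul hc)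
    ((gcd_isUnit_iff A B).mp hAB) (by ring) with ⟨hA, -, -⟩ | ⟨hA, -, -⟩
  · have hdvd : A * B * C ∣ g * A * (g * B) * (g * C) := ⟨g ^ 3, by ring⟩
    have := natDegree_le_of_dvd (radical_dvd_radical hdvd (mul_ne_zero (mul_ne_zero ha hb) hc))
      radical_ne_zero
    omega
  · rw [derivative_eq_zero.mp hA] at hdeg
    omega

theorem natDegree_radical_pow_mul_pow_mul_le [DecidableEq k] {p q f : k[X]} {n m : ℕ}
    (hp : p ≠ 0) (hq : q ≠ 0) (hf : f ≠ 0) (hn : n ≠ 0) (hm : m ≠ 0) :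
    (radical (p ^ n * q ^ m * f)).natDegree ≤ p.natDegree + q.natDegree + f.natDegree := by
  have hdvd : radical (p ^ n * q ^ m * f) ∣ p * q * f :=
    calc radical (p ^ n * q ^ m * f) ∣ radical (p ^ n) * radical (q ^ m) * radical f :=
          radical_mul_dvd.trans (mul_dvd_mul_right radical_mul_dvd _)
      _ = radical p * radical q * radical f := by rw [radical_pow p hn, radical_pow q hm]
      _ ∣ p * q * f :=
          mul_dvd_mul (mul_dvd_mul radical_dvd_self radical_dvd_self) radical_dvd_self
  grw [natDegree_le_of_dvd hdvd (mul_ne_zero (mul_ne_zero hp hq) hf),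
    natDegree_mul (mul_ne_zero hp hq) hf, natDegree_mul hp hq]

theorem mul_natDegree_le_of_pow_sub_pow_eq [CharZero k] {p q f : k[X]} {n m : ℕ} (hp : p ≠ 0)
    (hq : q ≠ 0) (hf : f ≠ 0) (hn : n ≠ 0) (hm : m ≠ 0) (h : p ^ n - q ^ m = f) :
    n * p.natDegree ≤ p.natDegree + q.natDegree + 2 * f.natDegree ∧
      m * q.natDegree ≤ p.natDegree + q.natDegree + 2 * f.natDegree := by
  classical
  have hrad := natDegree_radical_pow_mul_pow_mul_le hp hq hf hn hm
  have hP : p ^ n ≠ 0 := pow_ne_zero n hp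
  have hQ : -q ^ m ≠ 0 := neg_ne_zero.mpr (pow_ne_zero m hq)
  have hF : -f ≠ 0 := neg_ne_zero.mpr hf
  have hp_le := natDegree_le_natDegree_add_natDegree_radical hP hQ hF (by rw [← h]; ring)
  have hq_le := natDegree_le_natDegree_add_natDegree_radical hQ hP hF (by rw [← h]; ring)
  rw [show p ^ n * -q ^ m * -f = p ^ n * q ^ m * f by ring] at hp_le
  rw [show -q ^ m * p ^ n * -f = p ^ n * q ^ m * f by ring] at hq_le
  simp only [natDegree_neg, natDegree_pow] at hp_le hq_le
  omega

theorem natDegree_le_of_sq_sub_sq_eq [NeZero (2 : k)] {p q f : k[X]} (hf : f ≠ 0)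
    (h : p ^ 2 - q ^ 2 = f) : p.natDegree ≤ f.natDegree ∧ q.natDegree ≤ f.natDegree := by
  have hfac : (p + q) * (p - q) = f := by rw [← h]; ring
  have hdeg : (p + q).natDegree + (p - q).natDegree = f.natDegree := by
    rw [← natDegree_mul (left_ne_zero_of_mul (hfac ▸ hf)) (right_ne_zero_of_mul (hfac ▸ hf)),
      hfac]
  have half (r : k[X]) : r = C (2⁻¹ : k) * (C 2 * r) := by
    rw [← mul_assoc, ← C_mul, inv_mul_cancel₀ two_ne_zero, C_1, one_mul]
  constructor
  · rw [half p, show C 2 * p = (p + q) + (p - q) by rw [C_ofNat]; ring]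
    grw [natDegree_C_mul_le, natDegree_add_le]
    omega
  · rw [half q, show C 2 * q = (p + q) - (p - q) by rw [C_ofNat]; ring]
    grw [natDegree_C_mul_le, natDegree_sub_le]
    omega

theorem mul_natDegree_le_twelve_mul_of_pow_sub_pow_eq [CharZero k] {p q f : k[X]} {n m : ℕ}
    (hp : p ≠ 0) (hq : q ≠ 0) (hf : f ≠ 0) (hn : 2 ≤ n) (hm : 2 ≤ m) (h : p ^ n - q ^ m = f) :
    n * p.natDegree ≤ 12 * f.natDegree ∧ m * q.natDegree ≤ 12 * f.natDegree := by
  obtain ⟨rfl, rfl⟩ | hnm : n = 2 ∧ m = 2 ∨ 3 ≤ n ∨ 3 ≤ m := by omega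
  · have := natDegree_le_of_sq_sub_sq_eq hf h
    omega
  · have := mul_natDegree_le_of_pow_sub_pow_eq hp hq hf (by omega) (by omega) h
    have : 2 * p.natDegree ≤ n * p.natDegree := Nat.mul_le_mul_right _ hn
    have : 2 * q.natDegree ≤ m * q.natDegree := Nat.mul_le_mul_right _ hm
    rcases hnm with hn | hm
    · have : 3 * p.natDegree ≤ n * p.natDegree := Nat.mul_le_mul_right _ hn
      omega
    · have : 3 * q.natDegree ≤ m * q.natDegree := Nat.mul_le_mul_right _ hm
      omega

end Polynomial

theorem pillai_polynomial_finiteness (f : ℂ[X]) (hf : 1 ≤ f.natDegree) :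
    {v : ℕ × ℕ × ℕ × ℕ | ∃ p q : ℂ[X],
      2 ≤ v.1 ∧ 2 ≤ v.2.1 ∧ 1 ≤ p.natDegree ∧ 1 ≤ q.natDegree ∧
      v.2.2.1 = p.natDegree ∧ v.2.2.2 = q.natDegree ∧
      p ^ v.1 - q ^ v.2.1 = f}.Finite := by
  set D := 12 * f.natDegree
  refine ((Set.finite_Iic D).prod ((Set.finite_Iic D).prod
    ((Set.finite_Iic D).prod (Set.finite_Iic D)))).subset ?_
  rintro ⟨n, m, _, _⟩ ⟨p, q, hn, hm, hp, hq, rfl, rfl, h⟩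
  dsimp only at hn hm h
  obtain ⟨hnp, hmq⟩ := mul_natDegree_le_twelve_mul_of_pow_sub_pow_eq
    (ne_zero_of_natDegree_gt hp) (ne_zero_of_natDegree_gt hq) (ne_zero_of_natDegree_gt hf) hn hm h
  simp only [Set.mem_prod, Set.mem_Iic]
  exact ⟨(Nat.le_mul_of_pos_right n hp).trans hnp, (Nat.le_mul_of_pos_right m hq).trans hmq,
    (Nat.le_mul_of_pos_left _ (by omega)).trans hnp, (Nat.le_mul_of_pos_left _ (by omega)).trans hmq⟩
end

section
/- Let f ∈ ℂ[x] with deg f ≥ 1 and suppose p² − q^m = f for an integer m ≥ 3 and polynomials p, q ∈ ℂ[x] with deg p ≥ deg q ≥ 1. Then deg p ≤ 4 + 12·deg f + 8·(deg f)². -/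
/-!
Write `p ^ 2 = d * A` and `q ^ m = d * B` with `A`, `B` coprime. Then `f = d * (A - B)`, so
`deg d ≤ deg f`, and Mason–Stothers for `A - B = f / d` bounds `deg A` by
`deg rad (p q f) ≤ deg p + deg q + deg f`. Hence `deg p ≤ 2 deg f + deg q`. Since
`q ^ m = p ^ 2 - f`, also `3 deg q ≤ m deg q ≤ max (2 deg p) (deg f)`, which forces
`deg p ≤ 6 deg f`.
-/

open Polynomial UniqueFactorizationMonoid

namespace Polynomial

variable {k : Type*} [Field k] [DecidableEq k]

theorem natDegree_radical_le (x : k[X]) : (radical x).natDegree ≤ x.natDegree := by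
  rcases eq_or_ne x 0 with rfl | hx
  · simp
  · exact natDegree_le_of_dvd radical_dvd_self hx

theorem natDegree_radical_le_of_dvd {x y : k[X]} (h : x ∣ y) (hy : y ≠ 0) :
    (radical x).natDegree ≤ (radical y).natDegree :=
  natDegree_le_of_dvd (radical_dvd_radical h hy) radical_ne_zero

theorem natDegree_radical_mul_le (x y : k[X]) :
    (radical (x * y)).natDegree ≤ (radical x).natDegree + (radical y).natDegree := by
  rw [← natDegree_mul radical_ne_zero radical_ne_zero]
  exact natDegree_le_of_dvd radical_mul_dvd (mul_ne_zero radical_ne_zero radical_ne_zero)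

variable [CharZero k]

theorem natDegree_le_radical_of_isCoprime {a b c : k[X]} (ha : a ≠ 0) (hb : b ≠ 0)
    (hc : c ≠ 0) (hab : IsCoprime a b) (h : a - b = c) :
    a.natDegree ≤ (radical a).natDegree + (radical b).natDegree + (radical c).natDegree := by
  have hrad : (radical (a * b * c)).natDegree ≤
      (radical a).natDegree + (radical b).natDegree + (radical c).natDegree :=
    (natDegree_radical_mul_le _ _).trans (by gcongr; exact natDegree_radical_mul_le a b)
  rcases Polynomial.abc ha (neg_ne_zero.mpr hb) (neg_ne_zero.mpr hc) hab.neg_right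
    (by rw [← h]; ring) with ⟨habc, -, -⟩ | ⟨ha', -, -⟩
  · rw [show a * -b * -c = a * b * c by ring] at habc
    omega
  · rw [derivative_eq_zero.mp ha']
    exact Nat.zero_le _

theorem natDegree_le_radical_of_sub_eq {a b c : k[X]} (hc : c ≠ 0) (h : a - b = c) :
    a.natDegree ≤ c.natDegree + (radical a).natDegree + (radical b).natDegree +
      (radical c).natDegree := by
  rcases eq_or_ne a 0 with rfl | ha
  · simp
  rcases eq_or_ne b 0 with rfl | hb
  · rw [sub_zero] at h
    subst h
    omega
  obtain ⟨A, B, d, hAB, rfl, rfl⟩ := exists_reduced_factors a ha b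
  obtain rfl : d * (A - B) = c := by rw [← h]; ring
  have hd : d ≠ 0 := left_ne_zero_of_mul hc
  have hC : A - B ≠ 0 := right_ne_zero_of_mul hc
  have hA : A ≠ 0 := right_ne_zero_of_mul ha
  have hB : B ≠ 0 := right_ne_zero_of_mul hb
  have hcoprime := natDegree_le_radical_of_isCoprime hA hB hC hAB.isCoprime rfl
  have hradA := natDegree_radical_le_of_dvd (dvd_mul_left A d) ha
  have hradB := natDegree_radical_le_of_dvd (dvd_mul_left B d) hb
  have hradC := natDegree_radical_le_of_dvd (dvd_mul_left (A - B) d) hc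
  rw [natDegree_mul hd hA, natDegree_mul hd hC]
  omega

end Polynomial

theorem pillai_case_n_two_m_ge_three_degp_general (f p q : ℂ[X]) (m : ℕ)
    (hf : 1 ≤ f.natDegree) (hm : 3 ≤ m)
    (heq : p ^ 2 - q ^ m = f) :
    p.natDegree ≤ 4 + 12 * f.natDegree + 8 * f.natDegree ^ 2 := by
  have hf0 : f ≠ 0 := by rintro rfl; simp at hf
  have hmain := natDegree_le_radical_of_sub_eq hf0 heq
  have hqm : (q ^ m).natDegree ≤ max (p ^ 2).natDegree f.natDegree := by
    rw [← sub_sub_cancel (p ^ 2) (q ^ m), heq]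
    exact natDegree_sub_le _ _
  rw [radical_pow p two_ne_zero, radical_pow q (by omega), natDegree_pow] at hmain
  rw [natDegree_pow, natDegree_pow] at hqm
  have hradp := natDegree_radical_le p
  have hradq := natDegree_radical_le q
  have hradf := natDegree_radical_le f
  have hmq : 3 * q.natDegree ≤ m * q.natDegree := Nat.mul_le_mul_right _ hm
  have hfsq : f.natDegree ≤ f.natDegree ^ 2 := Nat.le_self_pow two_ne_zero _
  omega

theorem pillai_case_n_two_m_ge_three_degp (f p q : ℂ[X]) (m : ℕ)
    (hf : 1 ≤ f.natDegree) (hm : 3 ≤ m)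
    (hq : 1 ≤ q.natDegree) (hpq : q.natDegree ≤ p.natDegree)
    (heq : p ^ 2 - q ^ m = f) :
    p.natDegree ≤ 4 + 12 * f.natDegree + 8 * f.natDegree ^ 2 :=
  pillai_case_n_two_m_ge_three_degp_general f p q m hf hm heq
end
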